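/- arXiv:1312.1872 — 2 statements merged into one kernel-verified Lean document; each statement's English description precedes it below -/
import Mathlib

section
/- Let q be a finite-dimensional Lie algebra over an algebraically closed field 𝕜 of characteristic zero and let h₁,…,h_m be homogeneous elements of the Poisson centre Z(q) = S(q)^q of S(q). For any ξ ∈ q*, write h_i(μ + aξ) = Σ_{j=0}^{deg h_i} (h_i)_ξ^j(μ) a^j for a ∈ 𝕜, μ ∈ q*. Then all the polynomials (h_i)_ξ^j, for i = 1,…,m and j = 0,1,…,deg h_i − 1, pairwise commute with respect to the Lie–Poisson bracket on S(q). -/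
open scoped BigOperators
open MvPolynomial Module

noncomputable section

namespace PY

variable (𝕜 : Type*) [Field 𝕜]

section LieDefs

variable (q : Type*) [LieRing q] [LieAlgebra 𝕜 q]

/-- The coadjoint stabiliser `q_ξ = {x ∈ q | ξ⁅x,·⁆ = 0}` of `ξ ∈ q*`. -/
def coadjStab (ξ : Module.Dual 𝕜 q) : Submodule 𝕜 q where
  carrier := {x | ∀ y : q, ξ ⁅x, y⁆ = 0}
  add_mem' := by
    intro a b ha hb
    intro y; rw [add_lie, map_add, ha y, hb y, add_zero]
  zero_mem' := by intro y; rw [zero_lie, map_zero]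
  smul_mem' := by intro c x hx y; rw [smul_lie, map_smul, hx y, smul_zero]

/-- The index of a Lie algebra: the minimal dimension of a coadjoint stabiliser. -/
def lieIndex : ℕ := sInf {n | ∃ ξ : Module.Dual 𝕜 q, finrank 𝕜 (coadjStab 𝕜 q ξ) = n}

/-- `b(q) = (dim q + ind q)/2`. -/
def bFn : ℕ := (finrank 𝕜 q + lieIndex 𝕜 q) / 2

/-- The set of regular elements of `q*`: those whose coadjoint stabiliser has minimal
dimension, equivalently whose coadjoint orbit has maximal dimension. -/
def regSet : Set (Module.Dual 𝕜 q) := {ξ | finrank 𝕜 (coadjStab 𝕜 q ξ) = lieIndex 𝕜 q}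

/-- The singular (non-regular) set of `q*`. -/
def singSet : Set (Module.Dual 𝕜 q) := {ξ | finrank 𝕜 (coadjStab 𝕜 q ξ) ≠ lieIndex 𝕜 q}

variable {q}
variable {ι : Type*} [Fintype ι] [DecidableEq ι]

/-- The linear polynomial on `q*` corresponding to `y ∈ q`, w.r.t. a basis `b` of `q`;
this realises `q ⊆ S(q) = 𝕜[q*]`. -/
def linPoly (b : Basis ι 𝕜 q) (y : q) : MvPolynomial ι 𝕜 :=
  ∑ i, MvPolynomial.C (b.repr y i) * X i

/-- Evaluation of `f ∈ S(q) = 𝕜[q*]` at a point `ξ ∈ q*`. -/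
def evalAt (b : Basis ι 𝕜 q) (ξ : Module.Dual 𝕜 q) (f : MvPolynomial ι 𝕜) : 𝕜 :=
  eval (fun i => ξ (b i)) f

/-- The differential of `f ∈ S(q)` at `ξ ∈ q*`, as an element of `q`. -/
def diffAt (b : Basis ι 𝕜 q) (ξ : Module.Dual 𝕜 q) (f : MvPolynomial ι 𝕜) : q :=
  ∑ i, (evalAt 𝕜 b ξ (pderiv i f)) • b i

/-- The Hamiltonian derivation `{p, ·}` of the Lie–Poisson structure on `S(q) = 𝕜[q*]`. -/
def poissonD (b : Basis ι 𝕜 q) (p : MvPolynomial ι 𝕜) :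
    Derivation 𝕜 (MvPolynomial ι 𝕜) (MvPolynomial ι 𝕜) :=
  mkDerivation 𝕜 (fun j => ∑ i, pderiv i p * linPoly 𝕜 b ⁅b i, b j⁆)

/-- The Lie–Poisson bracket `{p, f}` on `S(q) = 𝕜[q*]`:
`{p,f}(ξ) = ⟨[(dp)_ξ, (df)_ξ], ξ⟩`, written in the coordinates given by the basis `b`. -/
def liePoisson (b : Basis ι 𝕜 q) (p f : MvPolynomial ι 𝕜) : MvPolynomial ι 𝕜 :=
  poissonD 𝕜 b p f

/-- A subset of `S(q)` is Poisson-commutative if the Lie–Poisson bracket vanishes on it. -/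
def IsPoissonComm (b : Basis ι 𝕜 q) (A : Set (MvPolynomial ι 𝕜)) : Prop :=
  ∀ f ∈ A, ∀ g ∈ A, liePoisson 𝕜 b f g = 0

/-- The subalgebra of `S(q)` of invariants of a subset `S ⊆ q`,
i.e. `{f | {y, f} = 0 ∀ y ∈ S}`. -/
def invariants (b : Basis ι 𝕜 q) (S : Set q) : Subalgebra 𝕜 (MvPolynomial ι 𝕜) where
  carrier := {f | ∀ y ∈ S, poissonD 𝕜 b (linPoly 𝕜 b y) f = 0}
  mul_mem' := by
    intro f g hf hg y hy
    rw [Derivation.leibniz, hf y hy, hg y hy, smul_zero, smul_zero, add_zero]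
  add_mem' := by intro f g hf hg y hy; rw [map_add, hf y hy, hg y hy, add_zero]
  algebraMap_mem' := by intro r y hy; exact Derivation.map_algebraMap _ r

/-- The Poisson centre `Z(q) = S(q)^q` of `S(q)`; for a connected algebraic group `Q` with
Lie algebra `q` this is the algebra of invariants `𝕜[q*]^Q`. -/
def poissonCentre (b : Basis ι 𝕜 q) : Subalgebra 𝕜 (MvPolynomial ι 𝕜) where
  carrier := {f | ∀ p : MvPolynomial ι 𝕜, poissonD 𝕜 b p f = 0}
  mul_mem' := by
    intro f g hf hg p
    rw [Derivation.leibniz, hf p, hg p, smul_zero, smul_zero, add_zero]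
  add_mem' := by intro f g hf hg p; rw [map_add, hf p, hg p, add_zero]
  algebraMap_mem' := by intro r p; exact Derivation.map_algebraMap _ r

/-- `j`-th coefficient of `a ↦ f(μ + aξ)`: the `ξ`-shift `f_ξ^j` of `f`. -/
def shiftCoeff (b : Basis ι 𝕜 q) (ξ : Module.Dual 𝕜 q) (f : MvPolynomial ι 𝕜) (j : ℕ) :
    MvPolynomial ι 𝕜 :=
  (MvPolynomial.aeval
    (fun i => (Polynomial.C (X i) + Polynomial.C (C (ξ (b i))) * Polynomial.X :
      Polynomial (MvPolynomial ι 𝕜))) f).coeff j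

/-- The set of all `ξ`-shifts of elements of `B ⊆ S(q)`. -/
def shiftsSet (b : Basis ι 𝕜 q) (ξ : Module.Dual 𝕜 q) (B : Set (MvPolynomial ι 𝕜)) :
    Set (MvPolynomial ι 𝕜) :=
  {p | ∃ f ∈ B, ∃ j : ℕ, p = shiftCoeff 𝕜 b ξ f j}

/-- The Mishchenko–Fomenko subalgebra `F_ξ(B)` generated by all `ξ`-shifts of elements of `B`. -/
def mfAlgebra (b : Basis ι 𝕜 q) (ξ : Module.Dual 𝕜 q) (B : Set (MvPolynomial ι 𝕜)) :
    Subalgebra 𝕜 (MvPolynomial ι 𝕜) :=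
  Algebra.adjoin 𝕜 (shiftsSet 𝕜 b ξ B)

/-- The ideal of polynomials vanishing on a subset `S ⊆ q*`. -/
def vanishingIdeal (b : Basis ι 𝕜 q) (S : Set (Module.Dual 𝕜 q)) : Ideal (MvPolynomial ι 𝕜) where
  carrier := {f | ∀ ξ ∈ S, evalAt 𝕜 b ξ f = 0}
  add_mem' := by
    intro f g hf hg ξ hξ
    have hf' : eval (fun i => ξ (b i)) f = 0 := hf ξ hξ
    have hg' : eval (fun i => ξ (b i)) g = 0 := hg ξ hξ
    show eval (fun i => ξ (b i)) (f + g) = 0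
    rw [map_add, hf', hg', add_zero]
  zero_mem' := by
    intro ξ hξ
    show eval (fun i => ξ (b i)) (0 : MvPolynomial ι 𝕜) = 0
    rw [map_zero]
  smul_mem' := by
    intro c f hf ξ hξ
    have hf' : eval (fun i => ξ (b i)) f = 0 := hf ξ hξ
    show eval (fun i => ξ (b i)) (c * f) = 0
    rw [map_mul, hf', mul_zero]

/-- `S ⊆ q*` has codimension at least `n`: the Krull dimension of the coordinate ring of its
Zariski closure is at most `dim q - n`. -/
def codimGE (b : Basis ι 𝕜 q) (S : Set (Module.Dual 𝕜 q)) (n : ℕ) : Prop :=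
  ringKrullDim (MvPolynomial ι 𝕜 ⧸ vanishingIdeal 𝕜 b S) + (n : WithBot ℕ∞)
    ≤ (finrank 𝕜 q : WithBot ℕ∞)

variable (q) in
/-- The *codim-n property* for a Lie algebra `q`: the non-regular points of `q*` form a subset
of codimension at least `n`. -/
def hasCodimProp (n : ℕ) : Prop :=
  ∀ b : Basis (Fin (finrank 𝕜 q)) 𝕜 q, codimGE 𝕜 b (singSet 𝕜 q) n

/-- Transcendence degree (over `𝕜`) of a subalgebra: the supremum of the cardinalities of its
finite algebraically independent families. -/
def subTrdeg {R : Type*} [CommRing R] [Algebra 𝕜 R] (A : Subalgebra 𝕜 R) : ℕ :=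
  sSup {n | ∃ f : Fin n → A, AlgebraicIndependent 𝕜 f}

end LieDefs

section Symmetric

variable {g : Type*} [LieRing g] [LieAlgebra 𝕜 g]

/-- `σ` is an involution of the Lie algebra `g`. -/
def IsInvolution (σ : g ≃ₗ⁅𝕜⁆ g) : Prop := ∀ x, σ (σ x) = x

lemma invAdd (σ : g ≃ₗ⁅𝕜⁆ g) (a b : g) : σ (a + b) = σ a + σ b :=
  map_add (σ : g ≃ₗ[𝕜] g) a b

lemma invSmul (σ : g ≃ₗ⁅𝕜⁆ g) (c : 𝕜) (x : g) : σ (c • x) = c • σ x :=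
  map_smul (σ : g ≃ₗ[𝕜] g) c x

lemma invZero (σ : g ≃ₗ⁅𝕜⁆ g) : σ (0 : g) = 0 :=
  map_zero (σ : g ≃ₗ[𝕜] g)

/-- The `(+1)`-eigenspace `g₀` of an involution `σ`, as a Lie subalgebra. -/
def fixedAlg (σ : g ≃ₗ⁅𝕜⁆ g) : LieSubalgebra 𝕜 g where
  carrier := {x | σ x = x}
  add_mem' := by intro a b ha hb; show σ (a + b) = a + b; rw [invAdd]
                 rw [Set.mem_setOf_eq] at ha hb; rw [ha, hb]
  zero_mem' := by show σ 0 = 0; rw [invZero]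
  smul_mem' := by intro c x hx; show σ (c • x) = c • x; rw [invSmul]
                  rw [Set.mem_setOf_eq] at hx; rw [hx]
  lie_mem' := by intro x y hx hy; show σ ⁅x, y⁆ = ⁅x, y⁆
                 rw [Set.mem_setOf_eq] at hx hy
                 rw [LieEquiv.map_lie, hx, hy]

/-- The `(−1)`-eigenspace `g₁` of an involution `σ`, as a submodule. -/
def oddPart (σ : g ≃ₗ⁅𝕜⁆ g) : Submodule 𝕜 g where
  carrier := {x | σ x = -x}
  add_mem' := by intro a b ha hb; show σ (a + b) = -(a + b); rw [invAdd]
                 rw [Set.mem_setOf_eq] at ha hb; rw [ha, hb, neg_add]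
  zero_mem' := by show σ 0 = -0; rw [invZero, neg_zero]
  smul_mem' := by intro c x hx; show σ (c • x) = -(c • x); rw [invSmul]
                  rw [Set.mem_setOf_eq] at hx; rw [hx, smul_neg]

/-- A Cartan subspace of `g₁`: a maximal subspace of `g₁` consisting of pairwise commuting
semisimple elements. -/
def IsCartanSubspace (σ : g ≃ₗ⁅𝕜⁆ g) (c : Submodule 𝕜 g) : Prop :=
  (c ≤ oddPart 𝕜 σ ∧ (∀ x ∈ c, ∀ y ∈ c, ⁅x, y⁆ = 0) ∧
      ∀ x ∈ c, Module.End.IsSemisimple (LieAlgebra.ad 𝕜 g x)) ∧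
  ∀ c' : Submodule 𝕜 g,
    (c' ≤ oddPart 𝕜 σ ∧ (∀ x ∈ c', ∀ y ∈ c', ⁅x, y⁆ = 0) ∧
      ∀ x ∈ c', Module.End.IsSemisimple (LieAlgebra.ad 𝕜 g x)) → c ≤ c' → c' = c

/-- The rank `rk(g,g₀)` of the symmetric pair: the dimension of a Cartan subspace of `g₁`. -/
def pairRank (σ : g ≃ₗ⁅𝕜⁆ g) : ℕ :=
  sSup {n | ∃ c : Submodule 𝕜 g, IsCartanSubspace 𝕜 σ c ∧ finrank 𝕜 c = n}

/-- The centraliser `g_z` of an element `z`, as a Lie subalgebra. -/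
def cent (z : g) : LieSubalgebra 𝕜 g where
  carrier := {x | ⁅x, z⁆ = 0}
  add_mem' := by intro a b ha hb; show ⁅a + b, z⁆ = 0
                 rw [Set.mem_setOf_eq] at ha hb; rw [add_lie, ha, hb, add_zero]
  zero_mem' := by show ⁅(0 : g), z⁆ = 0; rw [zero_lie]
  smul_mem' := by intro c x hx; show ⁅c • x, z⁆ = 0
                  rw [Set.mem_setOf_eq] at hx; rw [smul_lie, hx, smul_zero]
  lie_mem' := by intro x y hx hy; show ⁅⁅x, y⁆, z⁆ = 0
                 rw [Set.mem_setOf_eq] at hx hy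
                 rw [lie_lie, hx, hy, lie_zero, lie_zero, sub_zero]

/-- `g_{0,z} = g_z ∩ g₀`, as a Lie subalgebra. -/
def cent0 (σ : g ≃ₗ⁅𝕜⁆ g) (z : g) : LieSubalgebra 𝕜 g where
  carrier := {x | σ x = x ∧ ⁅x, z⁆ = 0}
  add_mem' := by
    intro a b ha hb
    exact ⟨by rw [invAdd, ha.1, hb.1], by rw [add_lie, ha.2, hb.2, add_zero]⟩
  zero_mem' := ⟨by rw [invZero], by rw [zero_lie]⟩
  smul_mem' := by
    intro c x hx
    exact ⟨by rw [invSmul, hx.1], by rw [smul_lie, hx.2, smul_zero]⟩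
  lie_mem' := by
    intro x y hx hy
    exact ⟨by rw [LieEquiv.map_lie, hx.1, hy.1],
      by rw [lie_lie, hx.2, hy.2, lie_zero, lie_zero, sub_zero]⟩

/-- `g_{1,z} = g_z ∩ g₁`, as a submodule. -/
def cent1 (σ : g ≃ₗ⁅𝕜⁆ g) (z : g) : Submodule 𝕜 g where
  carrier := {x | σ x = -x ∧ ⁅x, z⁆ = 0}
  add_mem' := by
    intro a b ha hb
    exact ⟨by rw [invAdd, ha.1, hb.1, neg_add], by rw [add_lie, ha.2, hb.2, add_zero]⟩
  zero_mem' := ⟨by rw [invZero, neg_zero], by rw [zero_lie]⟩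
  smul_mem' := by
    intro c x hx
    exact ⟨by rw [invSmul, hx.1, smul_neg], by rw [smul_lie, hx.2, smul_zero]⟩

/-- The centraliser `r = z(c)₀` in `g₀` of a subspace `c ⊆ g₁`, as a Lie subalgebra. -/
def centSub (σ : g ≃ₗ⁅𝕜⁆ g) (c : Submodule 𝕜 g) : LieSubalgebra 𝕜 g where
  carrier := {x | σ x = x ∧ ∀ y ∈ c, ⁅x, y⁆ = 0}
  add_mem' := by
    intro a b ha hb
    refine ⟨by rw [invAdd, ha.1, hb.1], fun y hy => ?_⟩
    rw [add_lie, ha.2 y hy, hb.2 y hy, add_zero]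
  zero_mem' := ⟨by rw [invZero], fun y _ => by rw [zero_lie]⟩
  smul_mem' := by
    intro k x hx
    exact ⟨by rw [invSmul, hx.1], fun y hy => by rw [smul_lie, hx.2 y hy, smul_zero]⟩
  lie_mem' := by
    intro x y hx hy
    refine ⟨by rw [LieEquiv.map_lie, hx.1, hy.1], fun w hw => ?_⟩
    rw [lie_lie, hx.2 w hw, hy.2 w hw, lie_zero, lie_zero, sub_zero]

/-- Projection onto the `(+1)`-eigenspace of `σ` (characteristic ≠ 2). -/
def proj0 (σ : g ≃ₗ⁅𝕜⁆ g) (v : g) : g := (2 : 𝕜)⁻¹ • (v + σ v)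

/-- Projection onto the `(−1)`-eigenspace of `σ` (characteristic ≠ 2). -/
def proj1 (σ : g ≃ₗ⁅𝕜⁆ g) (v : g) : g := (2 : 𝕜)⁻¹ • (v - σ v)

/-- `k`, via the linear isomorphism `e : k ≃ g`, is the `Z₂`-contraction `g₀ ⋉ g₁` of `g`
determined by the involution `σ`: the bracket of `k` is the bracket of `g` with the
`g₁ × g₁ → g₀` component suppressed (so `g₁` becomes an abelian ideal). -/
def IsZ2Contraction (σ : g ≃ₗ⁅𝕜⁆ g) {k : Type*} [LieRing k] [LieAlgebra 𝕜 k]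
    (e : k ≃ₗ[𝕜] g) : Prop :=
  ∀ x y : k, e ⁅x, y⁆ =
    ⁅proj0 𝕜 σ (e x), proj0 𝕜 σ (e y)⁆ + ⁅proj0 𝕜 σ (e x), proj1 𝕜 σ (e y)⁆
      + ⁅proj1 𝕜 σ (e x), proj0 𝕜 σ (e y)⁆

/-- An element nilpotent in a Lie algebra: its adjoint action is nilpotent. -/
def IsNilpotentElt (x : g) : Prop := IsNilpotent (LieAlgebra.ad 𝕜 g x)

/-- An element semisimple in a Lie algebra: its adjoint action is semisimple. -/
def IsSemisimpleElt (x : g) : Prop := Module.End.IsSemisimple (LieAlgebra.ad 𝕜 g x)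

/-- The symmetric pair `(g, g₀)` is `N`-regular: `g₁` contains a regular nilpotent
element of `g`. -/
def IsNRegularPair [Module.Finite 𝕜 g] (σ : g ≃ₗ⁅𝕜⁆ g) : Prop :=
  ∃ v ∈ oddPart 𝕜 σ, IsNilpotentElt 𝕜 v ∧ LieAlgebra.IsRegular 𝕜 v

/-- `z` is a `G₀`-regular element of `g₁`: its stabiliser `g_{0,z}` in `g₀` has minimal
dimension, equivalently its `G₀`-orbit has maximal dimension. -/
def IsIsotropyRegular (σ : g ≃ₗ⁅𝕜⁆ g) (z : g) : Prop :=
  z ∈ oddPart 𝕜 σ ∧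
    ∀ y ∈ oddPart 𝕜 σ, finrank 𝕜 (cent0 𝕜 σ z) ≤ finrank 𝕜 (cent0 𝕜 σ y)

/-- A toral Lie algebra: abelian, with all elements semisimple (the Lie algebra of a torus). -/
def IsToral (h : LieSubalgebra 𝕜 g) : Prop :=
  (∀ x ∈ h, ∀ y ∈ h, ⁅x, y⁆ = 0) ∧ ∀ x ∈ h, IsSemisimpleElt 𝕜 x

end Symmetric

end PY

open PY Module

/-!
For `f, g ∈ Z(q)` and `s ≠ t`, the translates `f(· + sξ)` and `g(· + tξ)` Poisson-commute: at a
point `η` their differentials `u = (df)_{η+sξ}` and `w = (dg)_{η+tξ}` lie in the stabilisers of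
`η + sξ` and `η + tξ` respectively, so both functionals vanish on `⁅u, w⁆`, and hence so does `η`,
which is a linear combination of them. Expanding the two translates in powers of `s` and `t`, the
value of the bracket at `η` is a polynomial in `(s, t)` vanishing off the diagonal; over an infinite
field all its coefficients, the values at `η` of the brackets `{f_ξ^j, g_ξ^j'}`, therefore vanish.
-/

namespace PY

open MvPolynomial Finset

section CoefficientExtraction

variable {K : Type*} [Field K]

lemma eq_zero_of_sum_mul_pow_eq_zero {S : Set K} (hS : S.Infinite) {N : ℕ} (d : ℕ → K)
    (h : ∀ t ∈ S, ∑ j ∈ range N, d j * t ^ j = 0) {j : ℕ} (hj : j < N) : d j = 0 := by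
  set p : Polynomial K := ∑ j ∈ range N, Polynomial.C (d j) * Polynomial.X ^ j
  have hp : p = 0 := Polynomial.eq_zero_of_infinite_isRoot p <|
    hS.mono fun t ht => by simpa [p, Polynomial.eval_finsetSum] using h t ht
  simpa [p, Polynomial.finsetSum_coeff, hj] using congrArg (Polynomial.coeff · j) hp

lemma eq_zero_of_sum_sum_mul_pow_eq_zero_of_ne [Infinite K] {N M : ℕ} (c : ℕ → ℕ → K)
    (h : ∀ s t : K, s ≠ t → ∑ a ∈ range N, ∑ a' ∈ range M, c a a' * s ^ a * t ^ a' = 0)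
    {a a' : ℕ} (ha : a < N) (ha' : a' < M) : c a a' = 0 := by
  have inner (s : K) : ∑ a ∈ range N, c a a' * s ^ a = 0 := by
    refine eq_zero_of_sum_mul_pow_eq_zero (Set.finite_singleton s).infinite_compl
      (fun a' => ∑ a ∈ range N, c a a' * s ^ a) (fun t ht => ?_) ha'
    rw [← h s t (Ne.symm ht), sum_comm]
    simp only [sum_mul]
  exact eq_zero_of_sum_mul_pow_eq_zero Set.infinite_univ (fun a => c a a') (fun s _ => inner s) ha

end CoefficientExtraction

variable {𝕜 : Type*} [Field 𝕜] {q : Type*} [LieRing q] [LieAlgebra 𝕜 q] {ι : Type*}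
  (b : Basis ι 𝕜 q)

def translate (ν : Module.Dual 𝕜 q) : MvPolynomial ι 𝕜 →ₐ[𝕜] MvPolynomial ι 𝕜 :=
  aeval fun i => X i + C (ν (b i))

@[simp]
lemma translate_X (ν : Module.Dual 𝕜 q) (i : ι) : translate b ν (X i) = X i + C (ν (b i)) :=
  aeval_X _ _

lemma evalAt_translate (η ν : Module.Dual 𝕜 q) (f : MvPolynomial ι 𝕜) :
    evalAt 𝕜 b η (translate b ν f) = evalAt 𝕜 b (η + ν) f := by
  rw [evalAt, evalAt, translate, aeval_eq_bind₁, eval, eval₂Hom_bind₁]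
  congr
  simp

lemma pderiv_translate (ν : Module.Dual 𝕜 q) (i : ι) (f : MvPolynomial ι 𝕜) :
    pderiv i (translate b ν f) = translate b ν (pderiv i f) := by
  induction f using MvPolynomial.induction_on with
  | C a => simp
  | add f g hf hg => simp only [map_add, hf, hg]
  | mul_X f k hf =>
    simp only [map_mul, pderiv_mul, hf, translate_X, map_add, pderiv_C, add_zero]
    by_cases hik : k = i
    · simp [hik]
    · simp [pderiv_X_of_ne hik]

def shiftPoly (ξ : Module.Dual 𝕜 q) : MvPolynomial ι 𝕜 →ₐ[𝕜] Polynomial (MvPolynomial ι 𝕜) :=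
  aeval fun i => Polynomial.C (X i) + Polynomial.C (C (ξ (b i))) * Polynomial.X

lemma shiftCoeff_eq_coeff_shiftPoly (ξ : Module.Dual 𝕜 q) (f : MvPolynomial ι 𝕜) (j : ℕ) :
    shiftCoeff 𝕜 b ξ f j = (shiftPoly b ξ f).coeff j := rfl

lemma translate_smul_eq_eval_shiftPoly (ξ : Module.Dual 𝕜 q) (t : 𝕜) (f : MvPolynomial ι 𝕜) :
    translate b (t • ξ) f = (shiftPoly b ξ f).eval (C t) := by
  induction f using MvPolynomial.induction_on with
  | C a => simp [translate, shiftPoly, algebraMap_eq]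
  | add f g hf hg => simp only [map_add, hf, hg, Polynomial.eval_add]
  | mul_X f k hf =>
    simp only [map_mul, hf, Polynomial.eval_mul]
    simp [shiftPoly, mul_comm t]

lemma translate_smul_eq_sum (ξ : Module.Dual 𝕜 q) (t : 𝕜) (f : MvPolynomial ι 𝕜) {N : ℕ}
    (hN : (shiftPoly b ξ f).natDegree < N) :
    translate b (t • ξ) f = ∑ j ∈ range N, t ^ j • shiftCoeff 𝕜 b ξ f j := by
  simp [translate_smul_eq_eval_shiftPoly, Polynomial.eval_eq_sum_range' hN, smul_eq_C_mul,
    shiftCoeff_eq_coeff_shiftPoly, mul_comm]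

lemma eq_zero_of_forall_evalAt_eq_zero [Infinite 𝕜] {p : MvPolynomial ι 𝕜}
    (h : ∀ η, evalAt 𝕜 b η p = 0) : p = 0 :=
  MvPolynomial.funext fun x => by simpa [evalAt] using h (b.constr 𝕜 x)

section Fintype

variable [Fintype ι]

lemma evalAt_linPoly (η : Module.Dual 𝕜 q) (y : q) : evalAt 𝕜 b η (linPoly 𝕜 b y) = η y := by
  conv_rhs => rw [← b.sum_repr y, map_sum]
  simp only [evalAt, linPoly, map_sum, map_mul, eval_C, eval_X, map_smul, smul_eq_mul]

lemma poissonD_apply (p f : MvPolynomial ι 𝕜) :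
    poissonD 𝕜 b p f = ∑ j, (∑ i, pderiv i p * linPoly 𝕜 b ⁅b i, b j⁆) * pderiv j f := by
  classical
  have derivation_sum_apply (c : ι → MvPolynomial ι 𝕜) (g : MvPolynomial ι 𝕜) :
      (∑ j, c j • pderiv j) g = ∑ j, c j * pderiv j g := by
    rw [← Derivation.coeFnAddMonoidHom_apply, map_sum, Finset.sum_apply]
    rfl
  have h : poissonD 𝕜 b p = ∑ j, (∑ i, pderiv i p * linPoly 𝕜 b ⁅b i, b j⁆) • pderiv j :=
    derivation_ext fun k => by simp [poissonD, derivation_sum_apply, pderiv_X, Pi.single_apply]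
  rw [h, derivation_sum_apply]

lemma evalAt_poissonD (η : Module.Dual 𝕜 q) (p f : MvPolynomial ι 𝕜) :
    evalAt 𝕜 b η (poissonD 𝕜 b p f) = η ⁅diffAt 𝕜 b η p, diffAt 𝕜 b η f⁆ := by
  have eval_linPoly (y : q) : eval (fun i => η (b i)) (linPoly 𝕜 b y) = η y :=
    evalAt_linPoly b η y
  simp only [poissonD_apply, evalAt, diffAt, map_sum, map_mul, sum_lie, lie_sum, smul_lie,
    lie_smul, map_smul, smul_eq_mul, eval_linPoly, sum_mul, mul_sum]
  refine sum_congr rfl fun j _ => sum_congr rfl fun i _ => ?_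
  ring

lemma diffAt_linPoly (η : Module.Dual 𝕜 q) (y : q) : diffAt 𝕜 b η (linPoly 𝕜 b y) = y := by
  classical
  have pderiv_linPoly (i : ι) : pderiv i (linPoly 𝕜 b y) = C (b.repr y i) := by
    simp [linPoly, pderiv_X, Pi.single_apply]
  conv_rhs => rw [← b.sum_repr y]
  simp [diffAt, evalAt, pderiv_linPoly]

lemma diffAt_mem_coadjStab_of_mem_poissonCentre {f : MvPolynomial ι 𝕜}
    (hf : f ∈ poissonCentre 𝕜 b) (η : Module.Dual 𝕜 q) : diffAt 𝕜 b η f ∈ coadjStab 𝕜 q η := by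
  intro y
  have h := congrArg (evalAt 𝕜 b η) (hf (linPoly 𝕜 b y))
  rw [evalAt_poissonD, diffAt_linPoly] at h
  rw [← lie_skew, map_neg, h]
  simp [evalAt]

lemma diffAt_translate (η ν : Module.Dual 𝕜 q) (f : MvPolynomial ι 𝕜) :
    diffAt 𝕜 b η (translate b ν f) = diffAt 𝕜 b (η + ν) f := by
  simp only [diffAt, pderiv_translate, evalAt_translate]

def diffAtₗ (η : Module.Dual 𝕜 q) : MvPolynomial ι 𝕜 →ₗ[𝕜] q where
  toFun := diffAt 𝕜 b η
  map_add' f g := by simp only [diffAt, evalAt, map_add, add_smul, sum_add_distrib]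
  map_smul' a f := by simp [diffAt, evalAt, smul_sum, smul_smul]

lemma diffAtₗ_apply (η : Module.Dual 𝕜 q) (f : MvPolynomial ι 𝕜) :
    diffAtₗ b η f = diffAt 𝕜 b η f := rfl

lemma apply_lie_diffAt_translate_eq_zero {f g : MvPolynomial ι 𝕜} (hf : f ∈ poissonCentre 𝕜 b)
    (hg : g ∈ poissonCentre 𝕜 b) (η ξ : Module.Dual 𝕜 q) {s t : 𝕜} (hst : s ≠ t) :
    η ⁅diffAt 𝕜 b η (translate b (s • ξ) f), diffAt 𝕜 b η (translate b (t • ξ) g)⁆ = 0 := by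
  rw [diffAt_translate, diffAt_translate]
  set u := diffAt 𝕜 b (η + s • ξ) f
  set w := diffAt 𝕜 b (η + t • ξ) g
  have hs : (η + s • ξ) ⁅u, w⁆ = 0 := diffAt_mem_coadjStab_of_mem_poissonCentre b hf _ w
  have ht : (η + t • ξ) ⁅u, w⁆ = 0 := by
    rw [← lie_skew, map_neg, diffAt_mem_coadjStab_of_mem_poissonCentre b hg _ u, neg_zero]
  simp only [LinearMap.add_apply, LinearMap.smul_apply, smul_eq_mul] at hs ht
  have : (t - s) * η ⁅u, w⁆ = 0 := by linear_combination t * hs - s * ht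
  exact (mul_eq_zero.mp this).resolve_left (sub_ne_zero.mpr hst.symm)

lemma apply_lie_diffAt_shiftCoeff_eq_zero [Infinite 𝕜] {f g : MvPolynomial ι 𝕜}
    (hf : f ∈ poissonCentre 𝕜 b) (hg : g ∈ poissonCentre 𝕜 b) (ξ η : Module.Dual 𝕜 q)
    (j j' : ℕ) :
    η ⁅diffAt 𝕜 b η (shiftCoeff 𝕜 b ξ f j), diffAt 𝕜 b η (shiftCoeff 𝕜 b ξ g j')⁆ = 0 := by
  set N := (shiftPoly b ξ f).natDegree + j + 1
  set M := (shiftPoly b ξ g).natDegree + j' + 1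
  refine eq_zero_of_sum_sum_mul_pow_eq_zero_of_ne (N := N) (M := M)
    (fun a a' => η ⁅diffAt 𝕜 b η (shiftCoeff 𝕜 b ξ f a), diffAt 𝕜 b η (shiftCoeff 𝕜 b ξ g a')⁆)
    (fun s t hst => ?_) (by omega) (by omega)
  rw [← apply_lie_diffAt_translate_eq_zero b hf hg η ξ hst,
    translate_smul_eq_sum b ξ s f (N := N) (by omega),
    translate_smul_eq_sum b ξ t g (N := M) (by omega)]
  simp only [← diffAtₗ_apply, map_sum, map_smul, sum_lie, lie_sum, smul_lie, lie_smul,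
    smul_eq_mul, mul_sum]
  rw [sum_comm]
  refine sum_congr rfl fun a _ => sum_congr rfl fun a' _ => ?_
  ring

end Fintype

end PY

theorem statement1_general (𝕜 : Type*) [Field 𝕜] [CharZero 𝕜]
    (q : Type*) [LieRing q] [LieAlgebra 𝕜 q]
    {ι : Type*} [Fintype ι] (b : Basis ι 𝕜 q)
    (m : ℕ) (h : Fin m → MvPolynomial ι 𝕜)
    (hZ : ∀ i, h i ∈ poissonCentre 𝕜 b)
    (ξ : Module.Dual 𝕜 q) :
    ∀ (i i' : Fin m) (j j' : ℕ), j < (h i).totalDegree → j' < (h i').totalDegree →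
      liePoisson 𝕜 b (shiftCoeff 𝕜 b ξ (h i) j) (shiftCoeff 𝕜 b ξ (h i') j') = 0 := by
  intro i i' j j' _ _
  refine eq_zero_of_forall_evalAt_eq_zero b fun η => ?_
  rw [liePoisson, evalAt_poissonD]
  exact apply_lie_diffAt_shiftCoeff_eq_zero b (hZ i) (hZ i') ξ η j j'

/-- Mishchenko–Fomenko: the `ξ`-shifts `(h_i)_ξ^j`, `j = 0, …, deg h_i − 1`, of
homogeneous elements `h_1, …, h_m` of the Poisson centre `Z(q)` pairwise commute with respect to
the Lie–Poisson bracket. -/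
theorem statement1 (𝕜 : Type*) [Field 𝕜] [IsAlgClosed 𝕜] [CharZero 𝕜]
    (q : Type*) [LieRing q] [LieAlgebra 𝕜 q] [FiniteDimensional 𝕜 q]
    {ι : Type*} [Fintype ι] [DecidableEq ι] (b : Basis ι 𝕜 q)
    (m : ℕ) (h : Fin m → MvPolynomial ι 𝕜)
    (hZ : ∀ i, h i ∈ poissonCentre 𝕜 b)
    (hhom : ∀ i, (h i).IsHomogeneous ((h i).totalDegree))
    (ξ : Module.Dual 𝕜 q) :
    ∀ (i i' : Fin m) (j j' : ℕ), j < (h i).totalDegree → j' < (h i').totalDegree →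
      liePoisson 𝕜 b (shiftCoeff 𝕜 b ξ (h i) j) (shiftCoeff 𝕜 b ξ (h i') j') = 0 :=
  statement1_general 𝕜 q b m h hZ ξ
end
end

section
/- Let g be a finite-dimensional semisimple Lie algebra over an algebraically closed field of characteristic zero, σ an involutive automorphism of g with eigenspace decomposition g = g₀ ⊕ g₁ (g_i the (−1)^i-eigenspace). Then for every v ∈ g₁, writing g_v for the centraliser of v in g, g_{0,v} = g_v ∩ g₀ and g_{1,v} = g_v ∩ g₁, one has dim g₀ − dim g_{0,v} = dim g₁ − dim g_{1,v}. -/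
open scoped BigOperators
open MvPolynomial Module

noncomputable section

open PY Module

/-! The Killing form `κ` is nondegenerate (Cartan's criterion) and `σ`-invariant, so `g₀ ⊥ g₁`
and `κ` stays nondegenerate on `g₀` and on `g₁`. By ad-invariance of `κ`, `ad v : g₀ → g₁` and
`-ad v : g₁ → g₀` are adjoint for these restrictions, hence have equal rank; their kernels are
`g_{0,v}` and `g_{1,v}`, and rank–nullity concludes. -/

namespace LinearMap

section Separating

variable {R M : Type*} [CommRing R] [AddCommGroup M] [Module R M]

theorem BilinForm.separatingLeft_domRestrict₁₂ {B : LinearMap.BilinForm R M}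
    (hB : B.SeparatingLeft) {U U' : Submodule R M} (hUU' : U ⊔ U' = ⊤)
    (horth : ∀ x ∈ U, ∀ y ∈ U', B x y = 0) : (B.domRestrict₁₂ U U).SeparatingLeft := by
  intro x hx
  refine Subtype.ext (hB x fun z ↦ ?_)
  obtain ⟨y, hy, y', hy', rfl⟩ := Submodule.mem_sup.mp (hUU' ▸ Submodule.mem_top : z ∈ U ⊔ U')
  rw [map_add, show B x y = 0 from hx ⟨y, hy⟩, horth x x.2 y' hy', add_zero]

end Separating

variable {K V W : Type*} [Field K] [AddCommGroup V] [Module K V] [AddCommGroup W] [Module K W]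
  [FiniteDimensional K V]

theorem IsAdjointPair.finrank_range_eq {BV : LinearMap.BilinForm K V}
    {BW : LinearMap.BilinForm K W} (hV : BV.SeparatingLeft) (hW : BW.SeparatingLeft)
    {f : V →ₗ[K] W} {f' : W →ₗ[K] V} (h : IsAdjointPair BV BW f f') :
    finrank K (range f) = finrank K (range f') := by
  have hBW : Function.Injective BW := by
    rwa [← ker_eq_bot, ← separatingLeft_iff_ker_eq_bot]
  have hBV : Function.Surjective BV := by
    refine (injective_iff_surjective_of_finrank_eq_finrank Subspace.dual_finrank_eq.symm).mp ?_
    rwa [← ker_eq_bot, ← separatingLeft_iff_ker_eq_bot]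
  have hcomp : BW ∘ₗ f = f'.dualMap ∘ₗ BV := isAdjointPair_iff_comp_eq_compl₂.mp h
  calc finrank K (range f)
      = finrank K ((range f).map BW) := ((range f).equivMapOfInjective BW hBW).finrank_eq
    _ = finrank K (range f'.dualMap) := by
      rw [← range_comp, hcomp, range_comp, range_eq_top.mpr hBV, Submodule.map_top]
    _ = finrank K (range f') := finrank_range_dualMap_eq_finrank_range f'

end LinearMap

namespace PY

variable {𝕜 : Type*} [Field 𝕜] {g : Type*} [LieRing g] [LieAlgebra 𝕜 g] (σ : g ≃ₗ⁅𝕜⁆ g)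

section Decomposition

lemma proj0_mem_fixedAlg (hσ : IsInvolution 𝕜 σ) (z : g) : proj0 𝕜 σ z ∈ fixedAlg 𝕜 σ := by
  show σ _ = _
  rw [proj0, map_smul, map_add, hσ, add_comm]

lemma proj1_mem_oddPart (hσ : IsInvolution 𝕜 σ) (z : g) : proj1 𝕜 σ z ∈ oddPart 𝕜 σ := by
  show σ _ = _
  rw [proj1, map_smul, ← smul_neg, neg_sub, map_sub, hσ]

variable [NeZero (2 : 𝕜)]

lemma proj0_add_proj1 (z : g) : proj0 𝕜 σ z + proj1 𝕜 σ z = z := by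
  rw [proj0, proj1, ← smul_add, add_add_sub_cancel, ← two_smul 𝕜, smul_smul,
    inv_mul_cancel₀ two_ne_zero, one_smul]

lemma fixedAlg_sup_oddPart (hσ : IsInvolution 𝕜 σ) :
    (fixedAlg 𝕜 σ).toSubmodule ⊔ oddPart 𝕜 σ = ⊤ :=
  eq_top_iff.mpr fun z _ ↦ proj0_add_proj1 σ z ▸
    Submodule.add_mem_sup (proj0_mem_fixedAlg σ hσ z) (proj1_mem_oddPart σ hσ z)

lemma bilinForm_eq_zero_of_mem_fixedAlg_of_mem_oddPart {B : LinearMap.BilinForm 𝕜 g}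
    (hB : ∀ x y, B (σ x) (σ y) = B x y) {x y : g} (hx : x ∈ fixedAlg 𝕜 σ)
    (hy : y ∈ oddPart 𝕜 σ) : B x y = 0 := by
  have h := hB x y
  rw [hx, hy, map_neg, neg_eq_iff_add_eq_zero, ← two_mul, mul_eq_zero] at h
  exact h.resolve_left two_ne_zero

end Decomposition

section AdjointAction

open LieAlgebra LinearMap

variable {σ} {v : g}

lemma lie_mem_oddPart_of_mem_fixedAlg (hv : v ∈ oddPart 𝕜 σ) {x : g} (hx : x ∈ fixedAlg 𝕜 σ) :
    ⁅v, x⁆ ∈ oddPart 𝕜 σ := by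
  show σ _ = _
  rw [LieEquiv.map_lie, hv, hx, neg_lie]

lemma lie_mem_fixedAlg_of_mem_oddPart (hv : v ∈ oddPart 𝕜 σ) {y : g} (hy : y ∈ oddPart 𝕜 σ) :
    ⁅v, y⁆ ∈ fixedAlg 𝕜 σ := by
  show σ _ = _
  rw [LieEquiv.map_lie, hv, hy, neg_lie, lie_neg, neg_neg]

def adFixedToOdd (hv : v ∈ oddPart 𝕜 σ) : fixedAlg 𝕜 σ →ₗ[𝕜] oddPart 𝕜 σ :=
  (ad 𝕜 g v).restrict fun _ ↦ lie_mem_oddPart_of_mem_fixedAlg hv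

def adOddToFixed (hv : v ∈ oddPart 𝕜 σ) : oddPart 𝕜 σ →ₗ[𝕜] fixedAlg 𝕜 σ :=
  (ad 𝕜 g v).restrict fun _ ↦ lie_mem_fixedAlg_of_mem_oddPart hv

lemma finrank_ker_adFixedToOdd (hv : v ∈ oddPart 𝕜 σ) :
    finrank 𝕜 (ker (adFixedToOdd hv)) = finrank 𝕜 (cent0 𝕜 σ v) := by
  have hker : ker (adFixedToOdd hv) =
      (cent0 𝕜 σ v).toSubmodule.comap (fixedAlg 𝕜 σ).toSubmodule.subtype := by
    ext x
    rw [mem_ker, ← Submodule.coe_eq_zero]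
    change ⁅v, (x : g)⁆ = 0 ↔ σ x = x ∧ ⁅(x : g), v⁆ = 0
    rw [← lie_skew, neg_eq_zero]
    exact ⟨fun h ↦ ⟨x.2, h⟩, And.right⟩
  have hle : (cent0 𝕜 σ v).toSubmodule ≤ (fixedAlg 𝕜 σ).toSubmodule := fun _ hx ↦ hx.1
  rw [hker]
  exact (Submodule.comapSubtypeEquivOfLe hle).finrank_eq

lemma finrank_ker_adOddToFixed (hv : v ∈ oddPart 𝕜 σ) :
    finrank 𝕜 (ker (adOddToFixed hv)) = finrank 𝕜 (cent1 𝕜 σ v) := by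
  have hker : ker (adOddToFixed hv) = (cent1 𝕜 σ v).comap (oddPart 𝕜 σ).subtype := by
    ext y
    rw [mem_ker, ← Submodule.coe_eq_zero]
    change ⁅v, (y : g)⁆ = 0 ↔ σ y = -y ∧ ⁅(y : g), v⁆ = 0
    rw [← lie_skew, neg_eq_zero]
    exact ⟨fun h ↦ ⟨y.2, h⟩, And.right⟩
  have hle : cent1 𝕜 σ v ≤ oddPart 𝕜 σ := fun _ hy ↦ hy.1
  rw [hker]
  exact (Submodule.comapSubtypeEquivOfLe hle).finrank_eq

lemma isAdjointPair_adFixedToOdd_neg_adOddToFixed (hv : v ∈ oddPart 𝕜 σ) :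
    IsAdjointPair ((killingForm 𝕜 g).domRestrict₁₂ (fixedAlg 𝕜 σ).toSubmodule (fixedAlg 𝕜 σ))
      ((killingForm 𝕜 g).domRestrict₁₂ (oddPart 𝕜 σ) (oddPart 𝕜 σ))
      (adFixedToOdd hv) ⇑(-adOddToFixed hv) := fun x y ↦ by
  show killingForm 𝕜 g ⁅v, (x : g)⁆ y = killingForm 𝕜 g x (-⁅v, (y : g)⁆)
  rw [map_neg]
  exact LieModule.traceForm_apply_lie_apply' 𝕜 g g v x y

lemma finrank_range_adFixedToOdd_eq [NeZero (2 : 𝕜)] [FiniteDimensional 𝕜 g] [IsKilling 𝕜 g]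
    (hσ : IsInvolution 𝕜 σ) (hv : v ∈ oddPart 𝕜 σ) :
    finrank 𝕜 (range (adFixedToOdd hv)) = finrank 𝕜 (range (adOddToFixed hv)) := by
  have hκ := (IsKilling.killingForm_nondegenerate 𝕜 g).1
  have hκσ : ∀ x y, killingForm 𝕜 g (σ x) (σ y) = killingForm 𝕜 g x y :=
    killingForm_of_equiv_apply σ
  have h01 := fixedAlg_sup_oddPart σ hσ
  rw [← range_neg (adOddToFixed hv)]
  refine (isAdjointPair_adFixedToOdd_neg_adOddToFixed hv).finrank_range_eq
    (BilinForm.separatingLeft_domRestrict₁₂ hκ h01 fun x hx y hy ↦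
      bilinForm_eq_zero_of_mem_fixedAlg_of_mem_oddPart σ hκσ hx hy)
    (BilinForm.separatingLeft_domRestrict₁₂ hκ (by rwa [sup_comm] at h01) fun x hx y hy ↦ ?_)
  rw [LieModule.traceForm_comm]
  exact bilinForm_eq_zero_of_mem_fixedAlg_of_mem_oddPart σ hκσ hy hx

end AdjointAction

end PY

theorem statement6_general (𝕜 : Type*) [Field 𝕜] [CharZero 𝕜]
    (g : Type*) [LieRing g] [LieAlgebra 𝕜 g] [FiniteDimensional 𝕜 g]
    [LieAlgebra.IsSemisimple 𝕜 g]
    (σ : g ≃ₗ⁅𝕜⁆ g) (hσ : IsInvolution 𝕜 σ)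
    (v : g) (hv : v ∈ oddPart 𝕜 σ) :
    finrank 𝕜 (fixedAlg 𝕜 σ) + finrank 𝕜 (cent1 𝕜 σ v)
      = finrank 𝕜 (oddPart 𝕜 σ) + finrank 𝕜 (cent0 𝕜 σ v) := by
  have hrank := finrank_range_adFixedToOdd_eq hσ hv
  have h0 := LinearMap.finrank_range_add_finrank_ker (adFixedToOdd hv)
  have h1 := LinearMap.finrank_range_add_finrank_ker (adOddToFixed hv)
  rw [finrank_ker_adFixedToOdd] at h0
  rw [finrank_ker_adOddToFixed] at h1
  omega

/-- for an involution `σ` of a semisimple Lie algebra `g` with eigenspace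
decomposition `g = g₀ ⊕ g₁` and any `v ∈ g₁`, one has
`dim g₀ − dim g_{0,v} = dim g₁ − dim g_{1,v}` (stated additively). -/
theorem statement6 (𝕜 : Type*) [Field 𝕜] [IsAlgClosed 𝕜] [CharZero 𝕜]
    (g : Type*) [LieRing g] [LieAlgebra 𝕜 g] [FiniteDimensional 𝕜 g]
    [LieAlgebra.IsSemisimple 𝕜 g]
    (σ : g ≃ₗ⁅𝕜⁆ g) (hσ : IsInvolution 𝕜 σ)
    (v : g) (hv : v ∈ oddPart 𝕜 σ) :
    finrank 𝕜 (fixedAlg 𝕜 σ) + finrank 𝕜 (cent1 𝕜 σ v)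
      = finrank 𝕜 (oddPart 𝕜 σ) + finrank 𝕜 (cent0 𝕜 σ v) :=
  statement6_general 𝕜 g σ hσ v hv
end
end
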